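/- arXiv:2409.07927 — 2 statements merged into one kernel-verified Lean document; each statement's English description precedes it below -/
import Mathlib

section
/- Let d ≥ 1 and let X_1, …, X_{d+1} be i.i.d. random vectors in ℝ^d whose common distribution assigns probability zero to every affine hyperplane of ℝ^d. Define S_0 = 0 and S_i = X_1 + ⋯ + X_i for 1 ≤ i ≤ d+1. Then almost surely the d+2 points S_0, S_1, …, S_{d+1} are in general position, i.e. every d+1 of these points are affinely independent. -/
open MeasureTheory ProbabilityTheory
open scoped ENNReal RealInnerProductSpace

/-- The partial-sum process (random walk) of the increments `X`: at time `i` it equals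
`X 0 + ⋯ + X (i-1)`, and it equals `0` at time `0`. -/
noncomputable def walk {d m : ℕ} {Ω : Type*} (X : Fin m → Ω → EuclideanSpace ℝ (Fin d))
    (i : ℕ) (ω : Ω) : EuclideanSpace ℝ (Fin d) :=
  ∑ k ∈ Finset.univ.filter (fun k : Fin m => (k : ℕ) < i), X k ω

namespace WalkGP

variable {d : ℕ}

/-- A measure assigns zero mass to every affine hyperplane (through the normal form). -/
def HypNull (ν : Measure (EuclideanSpace ℝ (Fin d))) : Prop :=
  ∀ (u : EuclideanSpace ℝ (Fin d)) (c : ℝ), u ≠ 0 → ν {x | ⟪x, u⟫ = c} = 0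

lemma measurableSet_dep (k : ℕ) :
    MeasurableSet {y : Fin k → EuclideanSpace ℝ (Fin d) | ¬ LinearIndependent ℝ y} := by
  have : {y : Fin k → EuclideanSpace ℝ (Fin d) | ¬ LinearIndependent ℝ y}
      = {y : Fin k → EuclideanSpace ℝ (Fin d) | LinearIndependent ℝ y}ᶜ := rfl
  rw [this]
  exact (isOpen_setOf_linearIndependent.measurableSet).compl

lemma core : ∀ (k : ℕ), k ≤ d → ∀ ν : Fin k → Measure (EuclideanSpace ℝ (Fin d)),
    (∀ t, IsProbabilityMeasure (ν t)) → (∀ t, HypNull (ν t)) →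
    Measure.pi ν {y | ¬ LinearIndependent ℝ y} = 0 := by
  intro k
  induction k with
  | zero =>
    intro _ ν _ _
    have : {y : Fin 0 → EuclideanSpace ℝ (Fin d) | ¬ LinearIndependent ℝ y} = ∅ := by
      ext y; simp [linearIndependent_empty_type]
    rw [this]; exact measure_empty
  | succ k ih =>
    intro hk ν hprob hHyp
    haveI := hprob
    set N := {y : Fin (k+1) → EuclideanSpace ℝ (Fin d) | ¬ LinearIndependent ℝ y} with hNdef
    have hNm : MeasurableSet N := measurableSet_dep _
    set e := MeasurableEquiv.piFinSuccAbove (fun _ : Fin (k+1) => EuclideanSpace ℝ (Fin d))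
      (Fin.last k) with he
    have hmp := measurePreserving_piFinSuccAbove ν (Fin.last k)
    set νinit := Measure.pi fun j : Fin k => ν ((Fin.last k).succAbove j) with hνinit
    have hs : MeasurableSet (e.symm ⁻¹' N) := e.symm.measurable hNm
    have key : Measure.pi ν N = ((ν (Fin.last k)).prod νinit) (e.symm ⁻¹' N) := by
      rw [← hmp.map_eq, Measure.map_apply e.measurable hs]
      congr 1
      ext y; simp
    rw [key, Measure.prod_apply_symm hs]
    have hIH : νinit {w : Fin k → EuclideanSpace ℝ (Fin d) | ¬ LinearIndependent ℝ w} = 0 :=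
      ih (Nat.le_of_succ_le hk) _ (fun j => hprob _) (fun j => hHyp _)
    have hzero : (fun w => (ν (Fin.last k)) ((fun z => (z, w)) ⁻¹' (e.symm ⁻¹' N)))
        =ᵐ[νinit] 0 := by
      have hae : ∀ᵐ w ∂νinit, LinearIndependent ℝ w := by
        rw [ae_iff]
        simpa using hIH
      filter_upwards [hae] with w hw
      simp only [Pi.zero_apply]
      have hfr : Module.finrank ℝ (Submodule.span ℝ (Set.range w)) = k :=
        (finrank_span_eq_card hw).trans (Fintype.card_fin k)
      have hne : Submodule.span ℝ (Set.range w) ≠ ⊤ := by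
        intro h
        rw [h, finrank_top, finrank_euclideanSpace_fin] at hfr
        omega
      have hbot : (Submodule.span ℝ (Set.range w))ᗮ ≠ ⊥ :=
        fun h => hne (Submodule.orthogonal_eq_bot_iff.1 h)
      obtain ⟨u, hu, hu0⟩ := (Submodule.ne_bot_iff _).1 hbot
      refine measure_mono_null ?_ (hHyp (Fin.last k) u 0 hu0)
      intro z hz
      have hesymm : e.symm (z, w) = Fin.snoc w z := by
        simp [he, MeasurableEquiv.piFinSuccAbove, Fin.snocEquiv]
      have hz' : ¬ LinearIndependent ℝ (Fin.snoc w z : Fin (k+1) → EuclideanSpace ℝ (Fin d)) := by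
        have := hz
        simp only [Set.mem_preimage, hesymm, hNdef, Set.mem_setOf_eq] at this
        exact this
      rw [linearIndependent_fin_snoc] at hz'
      push_neg at hz'
      have hzspan : z ∈ Submodule.span ℝ (Set.range w) := hz' hw
      exact (Submodule.mem_orthogonal _ u).1 hu z hzspan
    rw [lintegral_congr_ae hzero]
    simp

lemma HypNull.map_add (μ : Measure (EuclideanSpace ℝ (Fin d))) (hμ : HypNull μ)
    (c : EuclideanSpace ℝ (Fin d)) : HypNull (Measure.map (· + c) μ) := by
  intro u C hu
  have hcont : Continuous fun x : EuclideanSpace ℝ (Fin d) => ⟪x, u⟫ :=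
    continuous_id.inner continuous_const
  rw [Measure.map_apply (measurable_add_const c)
    (measurableSet_eq_fun hcont.measurable measurable_const)]
  have : (· + c) ⁻¹' {x : EuclideanSpace ℝ (Fin d) | ⟪x, u⟫ = C}
      = {x : EuclideanSpace ℝ (Fin d) | ⟪x, u⟫ = C - ⟪c, u⟫} := by
    ext x
    simp only [Set.mem_preimage, Set.mem_setOf_eq, inner_add_left]
    constructor <;> intro h <;> linarith
  rw [this]
  exact hμ u _ hu

lemma map_add_pi {k : ℕ} (μ : Measure (EuclideanSpace ℝ (Fin d))) [IsProbabilityMeasure μ]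
    (c : Fin k → EuclideanSpace ℝ (Fin d)) :
    Measure.map (fun y : Fin k → EuclideanSpace ℝ (Fin d) => fun t => y t + c t)
      (Measure.pi fun _ => μ) = Measure.pi (fun t => Measure.map (· + c t) μ) := by
  haveI : ∀ t : Fin k, IsProbabilityMeasure (Measure.map (· + c t) μ) :=
    fun t => Measure.isProbabilityMeasure_map (measurable_add_const (c t)).aemeasurable
  refine (Measure.pi_eq fun s hs => ?_).symm
  have hF : Measurable (fun y : Fin k → EuclideanSpace ℝ (Fin d) => fun t => y t + c t) :=
    measurable_pi_lambda _ fun t => by fun_prop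
  rw [Measure.map_apply hF (MeasurableSet.univ_pi hs)]
  have : (fun y : Fin k → EuclideanSpace ℝ (Fin d) => fun t => y t + c t) ⁻¹' Set.pi Set.univ s
      = Set.pi Set.univ (fun t => (· + c t) ⁻¹' s t) := by
    ext y; simp [Set.mem_pi]
  rw [this, Measure.pi_pi]
  exact Finset.prod_congr rfl fun t _ => by
    rw [Measure.map_apply (measurable_add_const (c t)) (hs t)]

lemma core' (μ : Measure (EuclideanSpace ℝ (Fin d))) [IsProbabilityMeasure μ]
    (hμ : HypNull μ) (c : Fin d → EuclideanSpace ℝ (Fin d)) :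
    Measure.pi (fun _ : Fin d => μ)
      {y : Fin d → EuclideanSpace ℝ (Fin d) | ¬ LinearIndependent ℝ (fun t => y t + c t)} = 0 := by
  haveI : ∀ t : Fin d, IsProbabilityMeasure (Measure.map (· + c t) μ) :=
    fun t => Measure.isProbabilityMeasure_map (measurable_add_const (c t)).aemeasurable
  have hF : Measurable (fun y : Fin d → EuclideanSpace ℝ (Fin d) => fun t => y t + c t) :=
    measurable_pi_lambda _ fun t => by fun_prop
  have hset : {y : Fin d → EuclideanSpace ℝ (Fin d) | ¬ LinearIndependent ℝ (fun t => y t + c t)}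
      = (fun y : Fin d → EuclideanSpace ℝ (Fin d) => fun t => y t + c t) ⁻¹'
        {w : Fin d → EuclideanSpace ℝ (Fin d) | ¬ LinearIndependent ℝ w} := rfl
  rw [hset, ← Measure.map_apply hF (measurableSet_dep d), map_add_pi]
  exact core d le_rfl _ (fun t => inferInstance) (fun t => hμ.map_add μ (c t))

lemma pi_dep_blocks (μ : Measure (EuclideanSpace ℝ (Fin d))) [IsProbabilityMeasure μ]
    (hμ : HypNull μ) (B : Fin d → Finset (Fin (d+1))) (κ : Fin d → Fin (d+1))
    (hκB : ∀ t, κ t ∈ B t) (hκmem : ∀ s t, κ s ∈ B t → s = t) :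
    Measure.pi (fun _ : Fin (d+1) => μ)
      {x : Fin (d+1) → EuclideanSpace ℝ (Fin d) |
        ¬ LinearIndependent ℝ (fun t => ∑ k ∈ B t, x k)} = 0 := by
  classical
  have hκinj : Function.Injective κ := fun s t h => hκmem s t (h ▸ hκB t)
  set p : Fin (d+1) → Prop := fun k => k ∈ Set.range κ with hp
  letI : Fintype (Subtype p) := Subtype.fintype p
  set Y : (Fin (d+1) → EuclideanSpace ℝ (Fin d)) → Fin d → EuclideanSpace ℝ (Fin d) :=
    fun x t => ∑ k ∈ B t, x k with hY
  have hYcont : Continuous Y :=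
    continuous_pi fun t => continuous_finset_sum _ fun k _ => continuous_apply k
  set N := {x : Fin (d+1) → EuclideanSpace ℝ (Fin d) | ¬ LinearIndependent ℝ (Y x)} with hN
  have hNm : MeasurableSet N := by
    have h2 : N = Y ⁻¹' {w | ¬ LinearIndependent ℝ w} := rfl
    rw [h2]
    exact hYcont.measurable (measurableSet_dep d)
  set e := MeasurableEquiv.piEquivPiSubtypeProd (fun _ : Fin (d+1) => EuclideanSpace ℝ (Fin d)) p
    with he
  have hmp := measurePreserving_piEquivPiSubtypeProd (fun _ : Fin (d+1) => μ) p
  have hs : MeasurableSet (e.symm ⁻¹' N) := e.symm.measurable hNm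
  have key := hmp.measure_preimage hs.nullMeasurableSet
  have hEE : e ⁻¹' (e.symm ⁻¹' N) = N := by ext x; simp
  rw [hEE] at key
  rw [key, Measure.prod_apply_symm hs]
  have hzero : ∀ cc : {k // ¬ p k} → EuclideanSpace ℝ (Fin d),
      (Measure.pi fun _ : Subtype p => μ) ((fun y => (y, cc)) ⁻¹' (e.symm ⁻¹' N)) = 0 := by
    intro cc
    set κ' : Fin d ≃ Subtype p := Equiv.ofInjective κ hκinj with hκ'
    have hmp2 := measurePreserving_piCongrLeft (fun _ : Subtype p => μ) κ'
    set f := MeasurableEquiv.piCongrLeft (fun _ : Subtype p => EuclideanSpace ℝ (Fin d)) κ'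
      with hf
    have hA : MeasurableSet ((fun y => (y, cc)) ⁻¹' (e.symm ⁻¹' N)) :=
      (measurable_id.prodMk measurable_const) hs
    rw [← hmp2.map_eq, Measure.map_apply f.measurable hA]
    set C : Fin d → EuclideanSpace ℝ (Fin d) :=
      fun t => ∑ k ∈ (B t).erase (κ t), (if h : p k then 0 else cc ⟨k, h⟩) with hC
    have hxval : ∀ z : Fin d → EuclideanSpace ℝ (Fin d), ∀ t,
        Y (e.symm (f z, cc)) t = z t + C t := by
      intro z t
      have hx : ∀ k, e.symm (f z, cc) k = if h : p k then f z ⟨k, h⟩ else cc ⟨k, h⟩ := by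
        intro k
        simp [he, MeasurableEquiv.piEquivPiSubtypeProd]
      have h1 : e.symm (f z, cc) (κ t) = z t := by
        rw [hx (κ t), dif_pos (show p (κ t) from ⟨t, rfl⟩)]
        have h3 : (⟨κ t, show p (κ t) from ⟨t, rfl⟩⟩ : Subtype p) = κ' t := Subtype.ext rfl
        rw [h3, hf, MeasurableEquiv.coe_piCongrLeft, Equiv.piCongrLeft_apply_apply]
      have h2 : ∑ k ∈ (B t).erase (κ t), e.symm (f z, cc) k = C t := by
        rw [hC]
        refine Finset.sum_congr rfl fun k hk => ?_
        have hk1 : k ∈ B t := Finset.mem_of_mem_erase hk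
        have hk2 : k ≠ κ t := Finset.ne_of_mem_erase hk
        have hnp : ¬ p k := by
          rintro ⟨s, rfl⟩
          exact hk2 (by rw [hκmem s t hk1])
        rw [hx k, dif_neg hnp, dif_neg hnp]
      have h4 : Y (e.symm (f z, cc)) t = ∑ k ∈ (B t).erase (κ t), e.symm (f z, cc) k
          + e.symm (f z, cc) (κ t) := (Finset.sum_erase_add (B t) _ (hκB t)).symm
      rw [h4, h1, h2, add_comm]
    have hseteq : f ⁻¹' ((fun y => (y, cc)) ⁻¹' (e.symm ⁻¹' N))
        = {z : Fin d → EuclideanSpace ℝ (Fin d) |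
            ¬ LinearIndependent ℝ (fun t => z t + C t)} := by
      ext z
      simp only [Set.mem_preimage, hN, Set.mem_setOf_eq]
      have : Y (e.symm (f z, cc)) = fun t => z t + C t := funext (hxval z)
      rw [this]
    rw [hseteq]
    exact core' μ hμ C
  exact (lintegral_congr hzero).trans lintegral_zero

lemma walk_sub {m : ℕ} {Ω : Type*} (X : Fin m → Ω → EuclideanSpace ℝ (Fin d)) (ω : Ω)
    {b c : ℕ} (hbc : b ≤ c) :
    walk X c ω = walk X b ω
      + ∑ k ∈ Finset.univ.filter (fun k : Fin m => b ≤ (k : ℕ) ∧ (k : ℕ) < c), X k ω := by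
  classical
  unfold walk
  have h1 : (Finset.univ.filter fun k : Fin m => (k : ℕ) < c).filter
        (fun k : Fin m => (k : ℕ) < b)
      = Finset.univ.filter fun k : Fin m => (k : ℕ) < b := by
    ext k; simp only [Finset.mem_filter, Finset.mem_univ, true_and]; omega
  have h2 : (Finset.univ.filter fun k : Fin m => (k : ℕ) < c).filter
        (fun k : Fin m => ¬ (k : ℕ) < b)
      = Finset.univ.filter fun k : Fin m => b ≤ (k : ℕ) ∧ (k : ℕ) < c := by
    ext k; simp only [Finset.mem_filter, Finset.mem_univ, true_and]; omega
  rw [← Finset.sum_filter_add_sum_filter_not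
    (Finset.univ.filter fun k : Fin m => (k : ℕ) < c) (fun k : Fin m => (k : ℕ) < b), h1, h2]

end WalkGP

/-- For a random walk in `ℝ^d` whose i.i.d. increment distribution assigns zero
probability to every affine hyperplane, almost surely the `d+2` points
`S_0, S_1, …, S_{d+1}` are in general position: every `d+1` of them are affinely
independent. -/
theorem walk_general_position {d : ℕ} (hd : 1 ≤ d)
    {Ω : Type*} [MeasurableSpace Ω] (P : Measure Ω) [IsProbabilityMeasure P]
    (X : Fin (d + 1) → Ω → EuclideanSpace ℝ (Fin d))
    (hmeas : ∀ i, Measurable (X i))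
    (hindep : iIndepFun X P)
    (μ : Measure (EuclideanSpace ℝ (Fin d)))
    (hident : ∀ i, Measure.map (X i) P = μ)
    (hHy : ∀ (u : EuclideanSpace ℝ (Fin d)) (c : ℝ), u ≠ 0 →
      μ {x | ⟪x, u⟫ = c} = 0) :
    ∀ᵐ ω ∂P, ∀ i : Fin (d + 2),
      AffineIndependent ℝ (fun j : {j : Fin (d + 2) // j ≠ i} => walk X ((j : Fin (d+2)) : ℕ) ω) := by
  classical
  haveI : IsProbabilityMeasure μ := by
    rw [← hident 0]; exact Measure.isProbabilityMeasure_map (hmeas 0).aemeasurable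
  rw [ae_all_iff]
  intro i
  set T : Finset (Fin (d+2)) := {i}ᶜ with hT
  have hTcard : T.card = d + 1 := by
    rw [hT, Finset.card_compl]; simp
  set m : Fin (d+1) → Fin (d+2) := fun r => (T.orderIsoOfFin hTcard r : Fin (d+2)) with hm
  have hmmono : StrictMono m := fun r s h =>
    Subtype.coe_lt_coe.2 ((T.orderIsoOfFin hTcard).lt_iff_lt.2 h)
  have hmne : ∀ r, m r ≠ i := by
    intro r
    have h2 : m r ∈ T := (T.orderIsoOfFin hTcard r).2
    simp only [hT, Finset.mem_compl, Finset.mem_singleton] at h2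
    exact h2
  set a : Fin (d+1) → ℕ := fun r => ((m r : Fin (d+2)) : ℕ) with ha
  have hamono : StrictMono a := fun r s h => hmmono h
  have haub : ∀ r, a r < d + 2 := fun r => (m r).isLt
  set B : Fin d → Finset (Fin (d+1)) := fun t =>
    Finset.univ.filter (fun k : Fin (d+1) => a t.castSucc ≤ (k : ℕ) ∧ (k : ℕ) < a t.succ) with hB
  have hcs : ∀ t : Fin d, a t.castSucc < a t.succ := fun t => hamono Fin.castSucc_lt_succ
  set κ : Fin d → Fin (d+1) := fun t =>
    ⟨a t.castSucc, by have h1 := hcs t; have h2 := haub t.succ; omega⟩ with hκ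
  have hκB : ∀ t, κ t ∈ B t := by
    intro t
    simp only [hB, hκ, Finset.mem_filter, Finset.mem_univ, true_and]
    exact ⟨le_refl _, hcs t⟩
  have hκmem : ∀ s t, κ s ∈ B t → s = t := by
    intro s t hst
    simp only [hB, hκ, Finset.mem_filter, Finset.mem_univ, true_and] at hst
    obtain ⟨h1, h2⟩ := hst
    have h3 : t.castSucc ≤ s.castSucc := hamono.le_iff_le.1 h1
    have h4 : s.castSucc < t.succ := hamono.lt_iff_lt.1 h2
    have h5 : s ≤ t := Fin.castSucc_lt_succ_iff.1 h4
    have h6 : t ≤ s := Fin.castSucc_le_castSucc_iff.1 h3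
    exact le_antisymm h5 h6
  set Φ : Ω → (Fin (d+1) → EuclideanSpace ℝ (Fin d)) := fun ω k => X k ω with hΦdef
  have hΦ : Measurable Φ := measurable_pi_lambda _ hmeas
  have hlaw : Measure.map Φ P = Measure.pi fun _ : Fin (d+1) => μ := by
    refine (Measure.pi_eq fun s hs => ?_).symm
    rw [Measure.map_apply hΦ (MeasurableSet.univ_pi hs)]
    have hpre : Φ ⁻¹' Set.pi Set.univ s
        = ⋂ k ∈ (Finset.univ : Finset (Fin (d+1))), X k ⁻¹' s k := by
      ext ω; simp [hΦdef, Set.mem_pi]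
    rw [hpre, hindep.measure_inter_preimage_eq_mul Finset.univ (fun k _ => hs k)]
    exact Finset.prod_congr rfl fun k _ => by
      rw [← hident k, Measure.map_apply (hmeas k) (hs k)]
  set N := {x : Fin (d+1) → EuclideanSpace ℝ (Fin d) |
    ¬ LinearIndependent ℝ (fun t => ∑ k ∈ B t, x k)} with hNdef
  have hNm : MeasurableSet N := by
    have hYc : Continuous fun (x : Fin (d+1) → EuclideanSpace ℝ (Fin d)) (t : Fin d) =>
        ∑ k ∈ B t, x k :=
      continuous_pi fun t => continuous_finset_sum _ fun k _ => continuous_apply k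
    exact hYc.measurable (WalkGP.measurableSet_dep d)
  have hnull : Measure.pi (fun _ : Fin (d+1) => μ) N = 0 :=
    WalkGP.pi_dep_blocks μ hHy B κ hκB hκmem
  have hP : P (Φ ⁻¹' N) = 0 := by
    rw [← Measure.map_apply hΦ hNm, hlaw]; exact hnull
  rw [ae_iff]
  refine measure_mono_null ?_ hP
  intro ω hω
  simp only [Set.mem_setOf_eq] at hω
  simp only [Set.mem_preimage, hNdef, Set.mem_setOf_eq]
  intro hLI
  apply hω
  -- Now prove affine independence from linear independence of the block sums.
  have hcard : Fintype.card {j : Fin (d + 2) // j ≠ i} = (d + 1) := by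
    have h0 : Fintype.card {j : Fin (d + 2) // ¬ (j = i)}
        = Fintype.card (Fin (d + 2)) - Fintype.card {j : Fin (d + 2) // j = i} :=
      Fintype.card_subtype_compl _
    simpa [Fintype.card_subtype_eq] using h0
  rw [affineIndependent_iff_le_finrank_vectorSpan ℝ _ hcard]
  set q : {j : Fin (d + 2) // j ≠ i} → EuclideanSpace ℝ (Fin d) :=
    fun j => walk X ((j : Fin (d+2)) : ℕ) ω with hq
  have hmem : ∀ t : Fin d, (∑ k ∈ B t, X k ω) ∈ vectorSpan ℝ (Set.range q) := by
    intro t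
    have hwsub := WalkGP.walk_sub X ω (le_of_lt (hcs t))
    have hyd : (∑ k ∈ B t, X k ω) = walk X (a t.succ) ω - walk X (a t.castSucc) ω := by
      rw [hB]
      rw [hwsub]
      abel
    have h1 := vsub_mem_vectorSpan ℝ
      (Set.mem_range_self (f := q) (⟨m t.succ, hmne t.succ⟩ : {j : Fin (d + 2) // j ≠ i}))
      (Set.mem_range_self (f := q) (⟨m t.castSucc, hmne t.castSucc⟩ : {j : Fin (d + 2) // j ≠ i}))
    have h2 : q ⟨m t.succ, hmne t.succ⟩ -ᵥ q ⟨m t.castSucc, hmne t.castSucc⟩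
        = walk X (a t.succ) ω - walk X (a t.castSucc) ω := rfl
    rw [h2] at h1
    rw [hyd]
    exact h1
  have hspan : Submodule.span ℝ (Set.range fun t : Fin d => ∑ k ∈ B t, X k ω)
      ≤ vectorSpan ℝ (Set.range q) := by
    rw [Submodule.span_le]
    rintro _ ⟨t, rfl⟩
    exact hmem t
  have hrank : Module.finrank ℝ
      (Submodule.span ℝ (Set.range fun t : Fin d => ∑ k ∈ B t, X k ω)) = d :=
    (finrank_span_eq_card hLI).trans (Fintype.card_fin d)
  exact le_of_eq_of_le hrank.symm (Submodule.finrank_mono hspan)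
end

section
/- Let d ≥ 1 and let X_1, …, X_{d+1} be i.i.d. random vectors in ℝ^d whose common distribution assigns probability zero to every affine hyperplane of ℝ^d. Define S_i = X_1 + ⋯ + X_i for 1 ≤ i ≤ d+1. Then almost surely, for every choice of d distinct indices 1 ≤ i_1 < ⋯ < i_d ≤ d+1, the vectors S_{i_1}, …, S_{i_d} are linearly independent. -/
open MeasureTheory ProbabilityTheory
open scoped ENNReal RealInnerProductSpace

namespace WalkIndepAux

variable {d : ℕ}

local notation "E" => EuclideanSpace ℝ (Fin d)

/-- The set of pairs `(w, v)` with `v` in the span of the `w t` is measurable. -/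
lemma measurableSet_memSpan (k : ℕ) :
    MeasurableSet {p : (Fin k → E) × E | p.2 ∈ Submodule.span ℝ (Set.range p.1)} := by
  have h : {p : (Fin k → E) × E | p.2 ∈ Submodule.span ℝ (Set.range p.1)} =
      ⋂ n : ℕ, ⋃ q : Fin k → ℚ,
        {p : (Fin k → E) × E | ‖p.2 - ∑ t, (q t : ℝ) • p.1 t‖ < 1 / (n + 1)} := by
    ext p
    simp only [Set.mem_setOf_eq, Set.mem_iInter, Set.mem_iUnion]
    constructor
    · intro hp n
      obtain ⟨c, hc⟩ := Submodule.mem_span_range_iff_exists_fun ℝ |>.1 hp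
      set B : ℝ := (∑ t, ‖p.1 t‖) + 1 with hB
      have hsum_nonneg : (0:ℝ) ≤ ∑ t, ‖p.1 t‖ :=
        Finset.sum_nonneg fun t _ => norm_nonneg _
      have hBpos : 0 < B := by positivity
      have hδ : 0 < (1 / (n + 1 : ℝ)) / B := by positivity
      choose q hq using fun t => exists_rat_near (K := ℝ) (c t) hδ
      refine ⟨q, ?_⟩
      have hdiff : p.2 - ∑ t, (q t : ℝ) • p.1 t = ∑ t, (c t - (q t : ℝ)) • p.1 t := by
        rw [← hc, ← Finset.sum_sub_distrib]
        simp [sub_smul]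
      rw [hdiff]
      calc ‖∑ t, (c t - (q t : ℝ)) • p.1 t‖ ≤ ∑ t, ‖(c t - (q t : ℝ)) • p.1 t‖ :=
            norm_sum_le _ _
        _ ≤ ∑ t, ((1 / (n + 1 : ℝ)) / B) * ‖p.1 t‖ := by
            refine Finset.sum_le_sum fun t _ => ?_
            rw [norm_smul]
            exact mul_le_mul_of_nonneg_right (le_of_lt (hq t)) (norm_nonneg _)
        _ = ((1 / (n + 1 : ℝ)) / B) * ∑ t, ‖p.1 t‖ := (Finset.mul_sum _ _ _).symm
        _ < ((1 / (n + 1 : ℝ)) / B) * B := by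
            refine mul_lt_mul_of_pos_left ?_ hδ
            simp [hB]
        _ = 1 / (n + 1 : ℝ) := div_mul_cancel₀ _ (ne_of_gt hBpos)
    · intro hp
      have hcl : IsClosed ((Submodule.span ℝ (Set.range p.1) : Submodule ℝ E) : Set E) :=
        Submodule.closed_of_finiteDimensional _
      rw [← SetLike.mem_coe, ← hcl.closure_eq]
      refine Metric.mem_closure_iff.2 fun ε hε => ?_
      obtain ⟨n, hn⟩ := exists_nat_one_div_lt hε
      obtain ⟨q, hq⟩ := hp n
      refine ⟨∑ t, (q t : ℝ) • p.1 t, ?_, ?_⟩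
      · exact Submodule.sum_mem _ fun t _ =>
          Submodule.smul_mem _ _ (Submodule.subset_span ⟨t, rfl⟩)
      · rw [dist_eq_norm]
        exact hq.trans hn
  rw [h]
  refine MeasurableSet.iInter fun n => MeasurableSet.iUnion fun q => ?_
  have hm : Measurable fun p : (Fin k → E) × E => ‖p.2 - ∑ t, (q t : ℝ) • p.1 t‖ := by
    refine Measurable.norm (Measurable.sub measurable_snd ?_)
    exact Finset.measurable_sum _ fun t _ => by
      fun_prop
  exact measurableSet_lt hm measurable_const

/-- If `k < d` and `w : Fin k → ℝ^d`, then for any `c`, the set of `v` with `v + c` in the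
span of the `w t` is `μ`-null, since that span is a proper subspace. -/
lemma slice_null (μ : Measure E)
    (hHy : ∀ (u : E) (c : ℝ), u ≠ 0 → μ {x | ⟪x, u⟫ = c} = 0)
    {k : ℕ} (hk : k < d) (w : Fin k → E) (c : E) :
    μ {v : E | v + c ∈ Submodule.span ℝ (Set.range w)} = 0 := by
  classical
  have hlt : Submodule.span ℝ (Set.range w) < ⊤ := by
    refine span_lt_top_of_card_lt_finrank ?_
    have h1 : (Set.range w).toFinset.card ≤ k := by
      rw [Set.toFinset_card]
      exact (Fintype.card_range_le w).trans (by simp)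
    have h2 : Module.finrank ℝ E = d := finrank_euclideanSpace_fin
    omega
  have hne : (Submodule.span ℝ (Set.range w))ᗮ ≠ ⊥ := by
    rw [ne_eq, Submodule.orthogonal_eq_bot_iff]
    exact hlt.ne
  obtain ⟨u, huV, hu⟩ := (Submodule.ne_bot_iff _).1 hne
  refine measure_mono_null (fun v hv => ?_) (hHy u (-⟪c, u⟫) hu)
  have h0 : ⟪v + c, u⟫ = 0 := (Submodule.mem_orthogonal _ u).1 huV _ hv
  rw [inner_add_left] at h0
  simp only [Set.mem_setOf_eq]
  linarith

/-- Decomposition of the walk of `Fin.insertNth j v y` : the `v`-contribution appears iff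
`j < n`. -/
lemma walk_insertNth (j : Fin (d + 1)) (v : E) (y : Fin d → E) (n : ℕ) :
    walk (fun j (x : Fin (d + 1) → E) => x j) n (j.insertNth v y) =
      (if (j : ℕ) < n then v else 0) +
        ∑ k ∈ Finset.univ.filter (fun k : Fin d => ((j.succAbove k : Fin (d + 1)) : ℕ) < n),
          y k := by
  classical
  unfold walk
  rw [Finset.sum_filter, Finset.sum_filter,
    Fin.sum_univ_succAbove (fun k : Fin (d + 1) =>
      if (k : ℕ) < n then j.insertNth v y k else 0) j]
  simp

lemma measurable_walk (n : ℕ) :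
    Measurable fun x : Fin (d + 1) → E => walk (fun j (x : Fin (d + 1) → E) => x j) n x := by
  unfold walk
  exact Finset.measurable_sum _ fun t _ => measurable_pi_apply t

/-- Main lemma on the product space: for any strictly monotone choice of `k ≤ d` indices,
almost surely w.r.t. the product measure the corresponding partial sums are linearly
independent. -/
lemma pi_ae (μ : Measure E) [IsProbabilityMeasure μ]
    (hHy : ∀ (u : E) (c : ℝ), u ≠ 0 → μ {x | ⟪x, u⟫ = c} = 0) :
    ∀ (k : ℕ), k ≤ d → ∀ (i : Fin k → Fin (d + 1)), StrictMono i →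
      ∀ᵐ x ∂(Measure.pi fun _ : Fin (d + 1) => μ),
        LinearIndependent ℝ
          (fun t : Fin k => walk (fun j (x : Fin (d + 1) → E) => x j) ((i t : ℕ) + 1) x) := by
  classical
  intro k
  induction k with
  | zero =>
    intro _ i _
    exact ae_of_all _ fun x => linearIndependent_empty_type
  | succ k ih =>
    intro hk i hi
    have IH := ih (Nat.le_of_succ_le hk) (i ∘ Fin.castSucc)
      (hi.comp Fin.strictMono_castSucc)
    set W := fun n (x : Fin (d + 1) → E) =>
      walk (fun j (x : Fin (d + 1) → E) => x j) n x with hW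
    set j : Fin (d + 1) := i (Fin.last k) with hj
    set C : Set (Fin (d + 1) → E) :=
      {x | W ((j : ℕ) + 1) x ∈
        Submodule.span ℝ (Set.range fun t : Fin k => W ((i t.castSucc : ℕ) + 1) x)} with hCdef
    have hΦ : Measurable (fun x : Fin (d + 1) → E =>
        ((fun t : Fin k => W ((i t.castSucc : ℕ) + 1) x), W ((j : ℕ) + 1) x)) :=
      (measurable_pi_lambda _ fun t => measurable_walk _).prodMk (measurable_walk _)
    have hC : MeasurableSet C := hΦ (measurableSet_memSpan k)
    have key : (Measure.pi fun _ : Fin (d + 1) => μ) C = 0 := by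
      set ν := Measure.pi fun _ : Fin d => μ with hν
      have mp := (measurePreserving_piFinSuccAbove (fun _ : Fin (d + 1) => μ) j).symm
      rw [← mp.measure_preimage hC.nullMeasurableSet, ← Measure.prod_swap,
        Measure.map_apply measurable_swap
          ((MeasurableEquiv.piFinSuccAbove (fun _ : Fin (d + 1) => E) j).symm.measurable hC),
        Measure.measure_prod_null (measurable_swap
          ((MeasurableEquiv.piFinSuccAbove (fun _ : Fin (d + 1) => E) j).symm.measurable hC))]
      refine ae_of_all _ fun y => ?_
      have hsubset : (Prod.mk y ⁻¹' (Prod.swap ⁻¹'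
            ((MeasurableEquiv.piFinSuccAbove (fun _ : Fin (d + 1) => E) j).symm ⁻¹' C))) ⊆
          {v : E | v + (∑ m ∈ Finset.univ.filter
              (fun m : Fin d => ((j.succAbove m : Fin (d + 1)) : ℕ) < (j : ℕ) + 1), y m) ∈
            Submodule.span ℝ (Set.range fun t : Fin k =>
              ∑ m ∈ Finset.univ.filter
                (fun m : Fin d => ((j.succAbove m : Fin (d + 1)) : ℕ) < (i t.castSucc : ℕ) + 1),
                y m)} := by
        intro v hv
        have hins : (MeasurableEquiv.piFinSuccAbove (fun _ : Fin (d + 1) => E) j).symm (v, y) =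
            j.insertNth v y := by
          simp [MeasurableEquiv.piFinSuccAbove, Fin.insertNthEquiv]
        have hv' : j.insertNth v y ∈ C := by
          rw [← hins]; exact hv
        have e1 : W ((j : ℕ) + 1) (j.insertNth v y) =
            v + ∑ m ∈ Finset.univ.filter
              (fun m : Fin d => ((j.succAbove m : Fin (d + 1)) : ℕ) < (j : ℕ) + 1), y m := by
          rw [hW]; beta_reduce; rw [walk_insertNth, if_pos (Nat.lt_succ_self _)]
        have e2 : (fun t : Fin k => W ((i t.castSucc : ℕ) + 1) (j.insertNth v y)) =
            fun t : Fin k => ∑ m ∈ Finset.univ.filter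
              (fun m : Fin d => ((j.succAbove m : Fin (d + 1)) : ℕ) < (i t.castSucc : ℕ) + 1),
              y m := by
          funext t
          rw [hW]; beta_reduce; rw [walk_insertNth, if_neg, zero_add]
          have hlt : i t.castSucc < j := hi (Fin.castSucc_lt_last t)
          omega
        rw [hCdef] at hv'
        simp only [Set.mem_setOf_eq] at hv' ⊢
        rw [e1, e2] at hv'
        exact hv'
      exact measure_mono_null hsubset (slice_null μ hHy (Nat.lt_of_succ_le hk) _ _)
    have hC_ae : ∀ᵐ x ∂(Measure.pi fun _ : Fin (d + 1) => μ), x ∉ C := by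
      rw [ae_iff]
      simpa using key
    filter_upwards [IH, hC_ae] with x h1 h2
    have hsnoc : (fun t : Fin (k + 1) => W ((i t : ℕ) + 1) x) =
        Fin.snoc (fun t : Fin k => W ((i t.castSucc : ℕ) + 1) x) (W ((j : ℕ) + 1) x) := by
      funext t
      refine Fin.lastCases ?_ (fun t => ?_) t
      · simp [hj]
      · simp
    rw [show (fun t : Fin (k + 1) =>
        walk (fun j (x : Fin (d + 1) → E) => x j) ((i t : ℕ) + 1) x) =
        (fun t : Fin (k + 1) => W ((i t : ℕ) + 1) x) from rfl, hsnoc,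
      linearIndependent_fin_snoc]
    exact ⟨h1, h2⟩

end WalkIndepAux

/-- For a random walk in `ℝ^d` whose i.i.d. increment distribution assigns zero
probability to every affine hyperplane, almost surely every `d` of the vectors
`S_1, …, S_{d+1}` are linearly independent. Here a choice of indices
`1 ≤ i_1 < ⋯ < i_d ≤ d+1` is encoded as a strictly monotone map `i : Fin d → Fin (d+1)`,
the corresponding step being `S_{i k + 1}`. -/
theorem walk_steps_linearIndependent {d : ℕ} (hd : 1 ≤ d)
    {Ω : Type*} [MeasurableSpace Ω] (P : Measure Ω) [IsProbabilityMeasure P]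
    (X : Fin (d + 1) → Ω → EuclideanSpace ℝ (Fin d))
    (hmeas : ∀ i, Measurable (X i))
    (hindep : iIndepFun X P)
    (μ : Measure (EuclideanSpace ℝ (Fin d)))
    (hident : ∀ i, Measure.map (X i) P = μ)
    (hHy : ∀ (u : EuclideanSpace ℝ (Fin d)) (c : ℝ), u ≠ 0 →
      μ {x | ⟪x, u⟫ = c} = 0) :
    ∀ᵐ ω ∂P, ∀ i : Fin d → Fin (d + 1), StrictMono i →
      LinearIndependent ℝ (fun k : Fin d => walk X ((i k : ℕ) + 1) ω) := by
  classical
  haveI : IsProbabilityMeasure μ := by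
    rw [← hident 0]
    exact Measure.isProbabilityMeasure_map (hmeas 0).aemeasurable
  set Φ : Ω → (Fin (d + 1) → EuclideanSpace ℝ (Fin d)) := fun ω j => X j ω with hΦdef
  have hΦ : Measurable Φ := measurable_pi_lambda _ hmeas
  have hmap : Measure.map Φ P = Measure.pi fun _ : Fin (d + 1) => μ := by
    refine (Measure.pi_eq (μ := fun _ : Fin (d + 1) => μ) fun s hs => ?_).symm
    rw [Measure.map_apply hΦ (MeasurableSet.univ_pi hs)]
    have hpre : Φ ⁻¹' Set.pi Set.univ s = ⋂ j ∈ (Finset.univ : Finset (Fin (d + 1))),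
        X j ⁻¹' s j := by
      ext ω
      simp [hΦdef, Set.mem_pi]
    rw [hpre, hindep.measure_inter_preimage_eq_mul Finset.univ (fun j _ => hs j)]
    refine Finset.prod_congr rfl fun j _ => ?_
    rw [← hident j, Measure.map_apply (hmeas j) (hs j)]
  have hpi : ∀ᵐ x ∂(Measure.pi fun _ : Fin (d + 1) => μ),
      ∀ i : Fin d → Fin (d + 1), StrictMono i →
        LinearIndependent ℝ (fun t : Fin d =>
          walk (fun j (x : Fin (d + 1) → EuclideanSpace ℝ (Fin d)) => x j) ((i t : ℕ) + 1) x) := by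
    rw [ae_all_iff]
    intro i
    by_cases hi : StrictMono i
    · filter_upwards [WalkIndepAux.pi_ae μ hHy d le_rfl i hi] with x hx
      exact fun _ => hx
    · exact ae_of_all _ fun x h => absurd h hi
  have := ae_of_ae_map hΦ.aemeasurable (hmap ▸ hpi)
  filter_upwards [this] with ω hω i hi
  have hwe : (fun t : Fin d => walk X ((i t : ℕ) + 1) ω) =
      fun t : Fin d => walk (fun j (x : Fin (d + 1) → EuclideanSpace ℝ (Fin d)) => x j)
        ((i t : ℕ) + 1) (Φ ω) := rfl
  rw [hwe]
  exact hω i hi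
end
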